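/- Let m, n be positive integers and h a norm on ℝ^m with generated norm H on ℝ^{m×n}. Then the dual norm of H is the operator norm from (ℝ^n, |·|) to (ℝ^m, h_*): for every M ∈ ℝ^{m×n}, sup { M:N : N ∈ ℝ^{m×n}, H(N) ≤ 1 } = sup { h_*(M e) : e ∈ ℝ^n, |e| = 1 }. -/

import Mathlib

open MeasureTheory

noncomputable section

/-- `ℝ^n` with the Euclidean norm. -/
abbrev Euc (n : ℕ) := EuclideanSpace ℝ (Fin n)

/-- `h` is a norm on `ℝ^m`. -/
def IsNorm {m : ℕ} (h : (Fin m → ℝ) → ℝ) : Prop :=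
  (∀ x y, h (x + y) ≤ h x + h y) ∧ (∀ (c : ℝ) (x), h (c • x) = |c| * h x) ∧
    ∀ x, h x = 0 → x = 0

/-- The dual norm `h_*` of `h`: `h_*(g) = sup { g·θ : h θ ≤ 1 }`. -/
def dualNorm {m : ℕ} (h : (Fin m → ℝ) → ℝ) (g : Fin m → ℝ) : ℝ :=
  sSup {r | ∃ θ : Fin m → ℝ, h θ ≤ 1 ∧ r = ∑ i, g i * θ i}

/-- Matrix-vector product `M u`. -/
def matVec {m n : ℕ} (M : Fin m → Fin n → ℝ) (u : Euc n) : Fin m → ℝ :=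
  fun i => ∑ j, M i j * u j

/-- Frobenius inner product `M : N`. -/
def frob {m n : ℕ} (M N : Fin m → Fin n → ℝ) : ℝ := ∑ i, ∑ j, M i j * N i j

/-- `M ∈ ∂H(0)`, i.e. `h_*(M u) ≤ 1` for all `|u| ≤ 1`. -/
def inSubdiffH {m n : ℕ} (h : (Fin m → ℝ) → ℝ) (M : Fin m → Fin n → ℝ) : Prop :=
  ∀ u : Euc n, ‖u‖ ≤ 1 → dualNorm h (matVec M u) ≤ 1

/-- The norm `H` on `ℝ^{m×n}` generated by `h`:
`H(N) = sup { M:N : M ∈ ∂H(0) }`. -/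
def genNorm {m n : ℕ} (h : (Fin m → ℝ) → ℝ) (N : Fin m → Fin n → ℝ) : ℝ :=
  sSup {r | ∃ M : Fin m → Fin n → ℝ, inSubdiffH h M ∧ r = frob M N}

/-- The rank-one matrix `θ ⊗ e`. -/
def outer {m n : ℕ} (θ : Fin m → ℝ) (e : Euc n) : Fin m → Fin n → ℝ :=
  fun i j => θ i * e j

/-!
Let `‖M‖` be the operator norm from `(ℝ^n, |·|)` to `(ℝ^m, h_*)` (`dualOpNorm`). For `h θ ≤ 1` and
`|e| ≤ 1` the rank-one matrix `θ ⊗ e` has `H(θ ⊗ e) ≤ 1`, and `M : (θ ⊗ e) = (M e) · θ`; taking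
suprema gives `‖M‖ ≤ H_*(M)`. Conversely, for every `a > ‖M‖` the matrix `a⁻¹ M` lies in `∂H(0)`,
so `M : N ≤ a H(N)`. All the suprema involved are finite because, by equivalence of norms on
`ℝ^m`, the unit ball of `h` is bounded.
-/

namespace IsNorm

variable {m : ℕ} {h : (Fin m → ℝ) → ℝ}

theorem map_zero (hh : IsNorm h) : h 0 = 0 := by
  simpa using hh.2.1 0 0

theorem nonneg (hh : IsNorm h) (x : Fin m → ℝ) : 0 ≤ h x := by
  have htri := hh.1 x (-x)
  have hneg := hh.2.1 (-1) x
  rw [add_neg_cancel, hh.map_zero] at htri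
  simp only [neg_smul, one_smul, abs_neg, abs_one, one_mul] at hneg
  linarith

/-- A type synonym carrying `h` as its norm, so that equivalence of norms in finite dimension
applies to `h`. -/
def Space (_h : (Fin m → ℝ) → ℝ) : Type := Fin m → ℝ

instance : AddCommGroup (Space h) := inferInstanceAs (AddCommGroup (Fin m → ℝ))

instance : Module ℝ (Space h) := inferInstanceAs (Module ℝ (Fin m → ℝ))

instance : Norm (Space h) := ⟨h⟩

theorem normedSpaceCore (hh : IsNorm h) : NormedSpace.Core ℝ (Space h) where
  norm_nonneg := hh.nonneg
  norm_smul := hh.2.1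
  norm_triangle := hh.1
  norm_eq_zero_iff x := ⟨hh.2.2 x, fun hx => hx ▸ hh.map_zero⟩

theorem exists_norm_le_mul (hh : IsNorm h) : ∃ K, 0 ≤ K ∧ ∀ x, ‖x‖ ≤ K * h x := by
  let := NormedAddCommGroup.ofCore hh.normedSpaceCore
  let := NormedSpace.ofCore hh.normedSpaceCore
  have : FiniteDimensional ℝ (Space h) := inferInstanceAs (FiniteDimensional ℝ (Fin m → ℝ))
  let e : Space h →L[ℝ] (Fin m → ℝ) := LinearMap.toContinuousLinearMap LinearMap.id
  exact ⟨‖e‖, norm_nonneg e, e.le_opNorm⟩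

end IsNorm

section DualNorm

variable {m : ℕ} {h : (Fin m → ℝ) → ℝ}

theorem exists_sum_mul_le_of_le_one (hh : IsNorm h) :
    ∃ K, 0 ≤ K ∧ ∀ g θ : Fin m → ℝ, h θ ≤ 1 → ∑ i, g i * θ i ≤ K * ∑ i, |g i| := by
  obtain ⟨K, hK0, hK⟩ := hh.exists_norm_le_mul
  refine ⟨K, hK0, fun g θ hθ => ?_⟩
  have hθK : ‖θ‖ ≤ K := (hK θ).trans (mul_le_of_le_one_right hK0 hθ)
  calc ∑ i, g i * θ i ≤ ∑ i, |g i| * K := Finset.sum_le_sum fun i _ => by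
        calc g i * θ i ≤ |g i| * |θ i| := by rw [← abs_mul]; exact le_abs_self _
          _ ≤ |g i| * K := by gcongr; exact (norm_le_pi_norm θ i).trans hθK
    _ = K * ∑ i, |g i| := by rw [Finset.mul_sum]; simp_rw [mul_comm]

theorem bddAbove_dualNorm_set (hh : IsNorm h) (g : Fin m → ℝ) :
    BddAbove {r | ∃ θ : Fin m → ℝ, h θ ≤ 1 ∧ r = ∑ i, g i * θ i} := by
  obtain ⟨K, -, hK⟩ := exists_sum_mul_le_of_le_one hh
  exact ⟨K * ∑ i, |g i|, by rintro _ ⟨θ, hθ, rfl⟩; exact hK g θ hθ⟩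

theorem sum_mul_le_dualNorm (hh : IsNorm h) (g : Fin m → ℝ) {θ : Fin m → ℝ} (hθ : h θ ≤ 1) :
    ∑ i, g i * θ i ≤ dualNorm h g :=
  le_csSup (bddAbove_dualNorm_set hh g) ⟨θ, hθ, rfl⟩

theorem dualNorm_nonneg (hh : IsNorm h) (g : Fin m → ℝ) : 0 ≤ dualNorm h g := by
  simpa using sum_mul_le_dualNorm hh g (θ := 0) (by simp [hh.map_zero])

theorem dualNorm_le {g : Fin m → ℝ} {B : ℝ} (hB : 0 ≤ B)
    (hgB : ∀ θ, h θ ≤ 1 → ∑ i, g i * θ i ≤ B) : dualNorm h g ≤ B :=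
  Real.sSup_le (by rintro _ ⟨θ, hθ, rfl⟩; exact hgB θ hθ) hB

theorem exists_dualNorm_le (hh : IsNorm h) :
    ∃ K, 0 ≤ K ∧ ∀ g, dualNorm h g ≤ K * ∑ i, |g i| := by
  obtain ⟨K, hK0, hK⟩ := exists_sum_mul_le_of_le_one hh
  refine ⟨K, hK0, fun g => csSup_le ⟨0, 0, by simp [hh.map_zero]⟩ ?_⟩
  rintro _ ⟨θ, hθ, rfl⟩
  exact hK g θ hθ

theorem dualNorm_smul_le (hh : IsNorm h) {a : ℝ} (ha : 0 ≤ a) (g : Fin m → ℝ) :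
    dualNorm h (a • g) ≤ a * dualNorm h g := by
  refine dualNorm_le (mul_nonneg ha (dualNorm_nonneg hh g)) fun θ hθ => ?_
  simp only [Pi.smul_apply, smul_eq_mul, mul_assoc, ← Finset.mul_sum]
  exact mul_le_mul_of_nonneg_left (sum_mul_le_dualNorm hh g hθ) ha

theorem sum_mul_le_dualNorm_mul (hh : IsNorm h) (g θ : Fin m → ℝ) :
    ∑ i, g i * θ i ≤ dualNorm h g * h θ := by
  rcases (hh.nonneg θ).eq_or_lt with hθ | hθ
  · simp [hh.2.2 θ hθ.symm, hh.map_zero]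
  · have := sum_mul_le_dualNorm hh g (θ := (h θ)⁻¹ • θ)
      (by rw [hh.2.1, abs_of_pos (inv_pos.2 hθ), inv_mul_cancel₀ hθ.ne'])
    simp only [Pi.smul_apply, smul_eq_mul, mul_left_comm _ (h θ)⁻¹, ← Finset.mul_sum] at this
    rwa [inv_mul_le_iff₀ hθ, mul_comm] at this

end DualNorm

section Matrix

variable {m n : ℕ}

theorem matVec_smul (M : Fin m → Fin n → ℝ) (a : ℝ) (u : Euc n) :
    matVec M (a • u) = a • matVec M u := by
  ext i
  simp only [matVec, PiLp.smul_apply, Pi.smul_apply, smul_eq_mul, Finset.mul_sum]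
  exact Finset.sum_congr rfl fun j _ => by ring

theorem smul_matVec (M : Fin m → Fin n → ℝ) (a : ℝ) (u : Euc n) :
    matVec (a • M) u = a • matVec M u := by
  ext i
  simp only [matVec, Pi.smul_apply, smul_eq_mul, Finset.mul_sum, mul_assoc]

theorem abs_matVec_le (M : Fin m → Fin n → ℝ) {u : Euc n} (hu : ‖u‖ ≤ 1) (i : Fin m) :
    |matVec M u i| ≤ ∑ j, |M i j| := by
  refine (Finset.abs_sum_le_sum_abs _ _).trans (Finset.sum_le_sum fun j _ => ?_)
  rw [abs_mul]
  exact mul_le_of_le_one_right (abs_nonneg _) ((PiLp.norm_apply_le u j).trans hu)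

theorem matVec_zero (M : Fin m → Fin n → ℝ) : matVec M 0 = 0 := by
  simpa using matVec_smul M 0 0

theorem matVec_single (M : Fin m → Fin n → ℝ) (j : Fin n) :
    matVec M (EuclideanSpace.single j 1) = fun i => M i j := by
  ext i
  simp [matVec]

theorem frob_smul (M N : Fin m → Fin n → ℝ) (a : ℝ) : frob (a • M) N = a * frob M N := by
  simp only [frob, Pi.smul_apply, smul_eq_mul, Finset.mul_sum, mul_assoc]

theorem frob_outer (M : Fin m → Fin n → ℝ) (θ : Fin m → ℝ) (e : Euc n) :
    frob M (outer θ e) = ∑ i, matVec M e i * θ i := by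
  simp only [frob, outer, matVec, Finset.sum_mul]
  exact Finset.sum_congr rfl fun i _ => Finset.sum_congr rfl fun j _ => by ring

theorem frob_eq_sum_col (M N : Fin m → Fin n → ℝ) :
    frob M N = ∑ j, ∑ i, matVec M (EuclideanSpace.single j 1) i * N i j := by
  simp only [frob, matVec_single]
  exact Finset.sum_comm

end Matrix

section GenNorm

variable {m n : ℕ} {h : (Fin m → ℝ) → ℝ}

theorem frob_le_sum_col (hh : IsNorm h) {A : Fin m → Fin n → ℝ} (hA : inSubdiffH h A)
    (N : Fin m → Fin n → ℝ) : frob A N ≤ ∑ j, h (fun i => N i j) := by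
  rw [frob_eq_sum_col]
  refine Finset.sum_le_sum fun j _ => ?_
  calc _ ≤ dualNorm h (matVec A (EuclideanSpace.single j 1)) * h (fun i => N i j) :=
        sum_mul_le_dualNorm_mul hh _ _
    _ ≤ 1 * h (fun i => N i j) :=
        mul_le_mul_of_nonneg_right (hA _ (by simp)) (hh.nonneg _)
    _ = _ := one_mul _

theorem frob_le_genNorm (hh : IsNorm h) {A : Fin m → Fin n → ℝ} (hA : inSubdiffH h A)
    (N : Fin m → Fin n → ℝ) : frob A N ≤ genNorm h N :=
  le_csSup ⟨_, by rintro _ ⟨A', hA', rfl⟩; exact frob_le_sum_col hh hA' N⟩ ⟨A, hA, rfl⟩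

theorem genNorm_outer_le (hh : IsNorm h) {θ : Fin m → ℝ} {e : Euc n} (hθ : h θ ≤ 1)
    (he : ‖e‖ ≤ 1) : genNorm h (outer θ e) ≤ 1 := by
  refine Real.sSup_le ?_ zero_le_one
  rintro _ ⟨A, hA, rfl⟩
  rw [frob_outer]
  exact (sum_mul_le_dualNorm hh _ hθ).trans (hA e he)

end GenNorm

section DualOpNorm

variable {m n : ℕ} {h : (Fin m → ℝ) → ℝ}

def dualOpNorm (h : (Fin m → ℝ) → ℝ) (M : Fin m → Fin n → ℝ) : ℝ :=
  sSup {r | ∃ e : Euc n, ‖e‖ = 1 ∧ r = dualNorm h (matVec M e)}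

theorem dualOpNorm_nonneg (hh : IsNorm h) (M : Fin m → Fin n → ℝ) : 0 ≤ dualOpNorm h M :=
  Real.sSup_nonneg <| by rintro _ ⟨e, -, rfl⟩; exact dualNorm_nonneg hh _

theorem dualNorm_matVec_le_dualOpNorm_of_norm_eq_one (hh : IsNorm h) (M : Fin m → Fin n → ℝ)
    {e : Euc n} (he : ‖e‖ = 1) : dualNorm h (matVec M e) ≤ dualOpNorm h M := by
  obtain ⟨K, hK0, hK⟩ := exists_dualNorm_le hh
  refine le_csSup ⟨K * ∑ i, ∑ j, |M i j|, ?_⟩ ⟨e, he, rfl⟩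
  rintro _ ⟨e', he', rfl⟩
  refine (hK _).trans (mul_le_mul_of_nonneg_left ?_ hK0)
  exact Finset.sum_le_sum fun i _ => abs_matVec_le M he'.le i

theorem dualNorm_matVec_le_dualOpNorm (hh : IsNorm h) (M : Fin m → Fin n → ℝ)
    {u : Euc n} (hu : ‖u‖ ≤ 1) : dualNorm h (matVec M u) ≤ dualOpNorm h M := by
  rcases eq_or_ne u 0 with rfl | hu0
  · rw [matVec_zero]
    exact (dualNorm_le le_rfl (by simp)).trans (dualOpNorm_nonneg hh M)
  · have hunit : ‖‖u‖⁻¹ • u‖ = 1 := norm_smul_inv_norm hu0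
    calc dualNorm h (matVec M u) = dualNorm h (‖u‖ • matVec M (‖u‖⁻¹ • u)) := by
          rw [← matVec_smul, smul_inv_smul₀ (norm_ne_zero_iff.2 hu0)]
      _ ≤ ‖u‖ * dualOpNorm h M :=
          (dualNorm_smul_le hh (norm_nonneg u) _).trans <| mul_le_mul_of_nonneg_left
            (dualNorm_matVec_le_dualOpNorm_of_norm_eq_one hh M hunit) (norm_nonneg u)
      _ ≤ dualOpNorm h M := mul_le_of_le_one_left (dualOpNorm_nonneg hh M) hu

theorem inSubdiffH_inv_smul (hh : IsNorm h) {M : Fin m → Fin n → ℝ} {a : ℝ}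
    (ha : dualOpNorm h M < a) : inSubdiffH h (a⁻¹ • M) := by
  have ha0 : 0 < a := (dualOpNorm_nonneg hh M).trans_lt ha
  intro u hu
  rw [smul_matVec]
  calc dualNorm h (a⁻¹ • matVec M u) ≤ a⁻¹ * dualNorm h (matVec M u) :=
        dualNorm_smul_le hh (inv_nonneg.2 ha0.le) _
    _ ≤ a⁻¹ * a := by
        gcongr
        exact (dualNorm_matVec_le_dualOpNorm hh M hu).trans ha.le
    _ = 1 := inv_mul_cancel₀ ha0.ne'

theorem frob_le_dualOpNorm (hh : IsNorm h) (M : Fin m → Fin n → ℝ) {N : Fin m → Fin n → ℝ}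
    (hN : genNorm h N ≤ 1) : frob M N ≤ dualOpNorm h M := by
  refine le_of_forall_gt_imp_ge_of_dense fun a ha => ?_
  have ha0 : 0 < a := (dualOpNorm_nonneg hh M).trans_lt ha
  have hMN : a⁻¹ * frob M N ≤ 1 := by
    rw [← frob_smul]
    exact (frob_le_genNorm hh (inSubdiffH_inv_smul hh ha) N).trans hN
  rwa [inv_mul_le_iff₀ ha0, mul_one] at hMN

end DualOpNorm

theorem statement1_general {m n : ℕ}
    (h : (Fin m → ℝ) → ℝ) (hh : IsNorm h) :
    ∀ M : Fin m → Fin n → ℝ,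
      sSup {r | ∃ N : Fin m → Fin n → ℝ, genNorm h N ≤ 1 ∧ r = frob M N} =
      sSup {r | ∃ e : Euc n, ‖e‖ = 1 ∧ r = dualNorm h (matVec M e)} := by
  intro M
  have hbdd : BddAbove {r | ∃ N : Fin m → Fin n → ℝ, genNorm h N ≤ 1 ∧ r = frob M N} :=
    ⟨dualOpNorm h M, by rintro _ ⟨N, hN, rfl⟩; exact frob_le_dualOpNorm hh M hN⟩
  have hnonneg : 0 ≤ sSup {r | ∃ N : Fin m → Fin n → ℝ, genNorm h N ≤ 1 ∧ r = frob M N} :=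
    le_csSup hbdd ⟨outer 0 0, genNorm_outer_le hh (by simp [hh.map_zero]) (by simp),
      by simp [frob, outer]⟩
  refine le_antisymm (Real.sSup_le ?_ (dualOpNorm_nonneg hh M)) (Real.sSup_le ?_ hnonneg)
  · rintro _ ⟨N, hN, rfl⟩
    exact frob_le_dualOpNorm hh M hN
  · rintro _ ⟨e, he, rfl⟩
    refine dualNorm_le hnonneg fun θ hθ => ?_
    rw [← frob_outer]
    exact le_csSup hbdd ⟨outer θ e, genNorm_outer_le hh hθ he.le, rfl⟩

/-- the dual norm of `H` is the operator norm from `(ℝ^n, |·|)` to `(ℝ^m, h_*)`. -/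
theorem statement1 {m n : ℕ} (hm : 0 < m) (hn : 0 < n)
    (h : (Fin m → ℝ) → ℝ) (hh : IsNorm h) :
    ∀ M : Fin m → Fin n → ℝ,
      sSup {r | ∃ N : Fin m → Fin n → ℝ, genNorm h N ≤ 1 ∧ r = frob M N} =
      sSup {r | ∃ e : Euc n, ‖e‖ = 1 ∧ r = dualNorm h (matVec M e)} :=
  statement1_general h hh
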